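/- arXiv:math-ph/0210028 — 2 statements merged into one kernel-verified Lean document; each statement's English description precedes it below -/
import Mathlib

section
/- Let K ⊂ ℝ^m with m ≥ 2 be a bounded domain on which the Poincaré–Sobolev inequality ‖f‖_{L²(K)}² ≤ C̃ ‖∇f‖_{L^{2m/(m+2)}(K)}² holds for all f ∈ H¹(K) with ∫_K f h = 0 (h bounded with ∫_K h = 1). Then for any measurable Ω ⊆ K and such f, ∫_Ω |∇f|² + (|K\Ω|/|K|)^{2/m} ∫_K |∇f|² ≥ (1/(2|K|^{2/m} C̃)) ∫_K |f|². -/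
/-!
Write `p = 2m/(m+2)`. Split `∫_K |∇f|^p` over `Ω` and `K \ Ω` and apply Hölder's inequality with
exponent `2/p` on each piece, bounding the first by `(∫_Ω |∇f|²)^{p/2} |K|^{1-p/2}` and the second
by `(∫_K |∇f|²)^{p/2} |K \ Ω|^{1-p/2}`. Raising to the power `2/p = (m+2)/m ∈ (1, 2]` costs at most
a factor `2` by convexity, and `2/p - 1 = 2/m`, so the Poincaré–Sobolev inequality yields
`∫_K f² ≤ 2 C̃ (|K|^{2/m} ∫_Ω |∇f|² + |K \ Ω|^{2/m} ∫_K |∇f|²)`.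
-/

open MeasureTheory Set

theorem Real.rpow_add_le_mul_rpow_add_rpow {a b : ℝ} (ha : 0 ≤ a) (hb : 0 ≤ b) {s : ℝ}
    (hs : 1 ≤ s) : (a + b) ^ s ≤ 2 ^ (s - 1) * (a ^ s + b ^ s) := by
  lift a to NNReal using ha
  lift b to NNReal using hb
  exact_mod_cast NNReal.rpow_add_le_mul_rpow_add_rpow a b hs

section

variable {α E : Type*} [MeasurableSpace α] [NormedAddCommGroup E] {μ : Measure α} {F : α → E}
  {p : ℝ}

/-- Hölder's inequality against the constant function `1`, with exponents `2 / p` and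
`2 / (2 - p)`. -/
theorem integral_norm_rpow_le_of_memLp_two [IsFiniteMeasure μ] (hF : MemLp F 2 μ)
    (hp : 0 < p) (hp2 : p < 2) :
    ∫ x, ‖F x‖ ^ p ∂μ ≤ (∫ x, ‖F x‖ ^ 2 ∂μ) ^ (p / 2) * (μ univ).toReal ^ (1 - p / 2) := by
  have hpq : Real.HolderConjugate (2 / p) (2 / (2 - p)) := by
    rw [Real.holderConjugate_iff]
    constructor
    · rw [lt_div_iff₀ hp]; linarith
    · field_simp; ring
  have hFp : MemLp (fun x => ‖F x‖ ^ p) (ENNReal.ofReal (2 / p)) μ := by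
    refine ⟨(Real.continuous_rpow_const hp.le).comp_aestronglyMeasurable hF.1.norm, ?_⟩
    rw [eLpNorm_norm_rpow F hp, ← ENNReal.ofReal_mul (by positivity), div_mul_cancel₀ _ hp.ne']
    exact ENNReal.rpow_lt_top_of_nonneg hp.le (by simpa using hF.2.ne)
  have H := integral_mul_le_Lp_mul_Lq_of_nonneg hpq
    (Filter.Eventually.of_forall fun x => Real.rpow_nonneg (norm_nonneg (F x)) p)
    (Filter.Eventually.of_forall fun _ => zero_le_one) hFp (memLp_const (1 : ℝ))
  have hpow : ∀ x, (‖F x‖ ^ p) ^ (2 / p) = ‖F x‖ ^ 2 := fun x => by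
    rw [← Real.rpow_mul (norm_nonneg _), mul_div_cancel₀ _ hp.ne', Real.rpow_two]
  simp only [mul_one, Real.one_rpow, integral_const, smul_eq_mul, hpow, one_div_div] at H
  rwa [show (2 - p) / 2 = 1 - p / 2 by ring] at H

theorem setIntegral_norm_rpow_le_of_memLp_two {S : Set α} (hS : μ S < ⊤)
    (hF : MemLp F 2 (μ.restrict S)) (hp : 0 < p) (hp2 : p < 2) :
    ∫ x in S, ‖F x‖ ^ p ∂μ
      ≤ (∫ x in S, ‖F x‖ ^ 2 ∂μ) ^ (p / 2) * (μ S).toReal ^ (1 - p / 2) := by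
  have : IsFiniteMeasure (μ.restrict S) := isFiniteMeasure_restrict.2 hS.ne
  simpa only [Measure.restrict_apply_univ] using integral_norm_rpow_le_of_memLp_two hF hp hp2

theorem setIntegral_norm_rpow_le_of_subset {K Ω : Set α} (hΩK : Ω ⊆ K) (hΩ : MeasurableSet Ω)
    (hK : μ K < ⊤) (hF : MemLp F 2 (μ.restrict K)) (hp : 0 < p) (hp2 : p < 2) :
    ∫ x in K, ‖F x‖ ^ p ∂μ
      ≤ (∫ x in Ω, ‖F x‖ ^ 2 ∂μ) ^ (p / 2) * (μ K).toReal ^ (1 - p / 2)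
        + (∫ x in K, ‖F x‖ ^ 2 ∂μ) ^ (p / 2) * (μ (K \ Ω)).toReal ^ (1 - p / 2) := by
  have : IsFiniteMeasure (μ.restrict K) := isFiniteMeasure_restrict.2 hK.ne
  have hFp : IntegrableOn (fun x => ‖F x‖ ^ p) K μ := by
    have := (hF.mono_exponent (p := ENNReal.ofReal p) (by
      simpa using ENNReal.ofReal_le_ofReal hp2.le)).integrable_norm_rpow
        (by simpa using hp) ENNReal.ofReal_ne_top
    rwa [ENNReal.toReal_ofReal hp.le] at this
  have hΩfin : μ Ω < ⊤ := (measure_mono hΩK).trans_lt hK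
  have hdiff_fin : μ (K \ Ω) < ⊤ := (measure_mono sdiff_subset).trans_lt hK
  have hΩ_le : ∫ x in Ω, ‖F x‖ ^ p ∂μ
      ≤ (∫ x in Ω, ‖F x‖ ^ 2 ∂μ) ^ (p / 2) * (μ K).toReal ^ (1 - p / 2) := by
    refine (setIntegral_norm_rpow_le_of_memLp_two hΩfin
      (hF.mono_measure (Measure.restrict_mono hΩK le_rfl)) hp hp2).trans ?_
    gcongr
    · linarith
    · exact hK.ne
  have hdiff_le : ∫ x in K \ Ω, ‖F x‖ ^ p ∂μ
      ≤ (∫ x in K, ‖F x‖ ^ 2 ∂μ) ^ (p / 2) * (μ (K \ Ω)).toReal ^ (1 - p / 2) := by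
    refine (setIntegral_norm_rpow_le_of_memLp_two hdiff_fin
      (hF.mono_measure (Measure.restrict_mono sdiff_subset le_rfl)) hp hp2).trans ?_
    gcongr ?_ ^ _ * _
    exact setIntegral_mono_set hF.norm.integrable_sq
      (Filter.Eventually.of_forall fun x => by positivity) sdiff_subset.eventuallyLE
  rw [← integral_inter_add_sdiff hΩ hFp, inter_eq_right.2 hΩK]
  exact add_le_add hΩ_le hdiff_le

theorem rpow_setIntegral_norm_rpow_le_of_subset {K Ω : Set α} (hΩK : Ω ⊆ K)
    (hΩ : MeasurableSet Ω) (hK : μ K < ⊤) (hF : MemLp F 2 (μ.restrict K)) (hp : 1 ≤ p)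
    (hp2 : p < 2) :
    (∫ x in K, ‖F x‖ ^ p ∂μ) ^ (2 / p)
      ≤ 2 * ((∫ x in Ω, ‖F x‖ ^ 2 ∂μ) * (μ K).toReal ^ (2 / p - 1)
        + (∫ x in K, ‖F x‖ ^ 2 ∂μ) * (μ (K \ Ω)).toReal ^ (2 / p - 1)) := by
  have hp0 : 0 < p := by linarith
  have hs : 1 ≤ 2 / p := by rw [le_div_iff₀ hp0]; linarith
  have hpow : ∀ {a b : ℝ}, 0 ≤ a → 0 ≤ b →
      (a ^ (p / 2) * b ^ (1 - p / 2)) ^ (2 / p) = a * b ^ (2 / p - 1) := fun ha hb => by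
    rw [Real.mul_rpow (by positivity) (by positivity), ← Real.rpow_mul ha, ← Real.rpow_mul hb,
      show p / 2 * (2 / p) = 1 by field_simp, show (1 - p / 2) * (2 / p) = 2 / p - 1 by
        field_simp, Real.rpow_one]
  have hconst : (2 : ℝ) ^ (2 / p - 1) ≤ 2 := by
    refine Real.rpow_le_self_of_one_le one_le_two ?_
    rw [sub_le_iff_le_add, div_le_iff₀ hp0]; linarith
  calc (∫ x in K, ‖F x‖ ^ p ∂μ) ^ (2 / p)
      ≤ ((∫ x in Ω, ‖F x‖ ^ 2 ∂μ) ^ (p / 2) * (μ K).toReal ^ (1 - p / 2)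
        + (∫ x in K, ‖F x‖ ^ 2 ∂μ) ^ (p / 2) * (μ (K \ Ω)).toReal ^ (1 - p / 2)) ^ (2 / p) := by
        gcongr
        exact setIntegral_norm_rpow_le_of_subset hΩK hΩ hK hF hp0 hp2
    _ ≤ 2 ^ (2 / p - 1) * (((∫ x in Ω, ‖F x‖ ^ 2 ∂μ) ^ (p / 2) * (μ K).toReal ^ (1 - p / 2))
          ^ (2 / p) + ((∫ x in K, ‖F x‖ ^ 2 ∂μ) ^ (p / 2) * (μ (K \ Ω)).toReal ^ (1 - p / 2))
          ^ (2 / p)) :=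
        Real.rpow_add_le_mul_rpow_add_rpow (by positivity) (by positivity) hs
    _ ≤ _ := by
        rw [hpow (by positivity) (by positivity), hpow (by positivity) (by positivity)]
        gcongr

end

theorem generalized_poincare_from_poincare_sobolev_general
    (m : ℕ) (hm : 2 ≤ m)
    (K : Set (EuclideanSpace ℝ (Fin m)))
    (hKbdd : Bornology.IsBounded K)
    (h : EuclideanSpace ℝ (Fin m) → ℝ)
    (Ctilde : ℝ) (hCt : 0 < Ctilde)
    -- the Poincaré–Sobolev inequality on K, for mean-zero H¹ functions:
    (hPS : ∀ f : EuclideanSpace ℝ (Fin m) → ℝ,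
      DifferentiableOn ℝ f K →
      MemLp f 2 (volume.restrict K) →
      MemLp (fun x => fderiv ℝ f x) 2 (volume.restrict K) →
      (∫ x in K, f x * h x) = 0 →
      (∫ x in K, (f x) ^ 2)
        ≤ Ctilde * (∫ x in K, ‖fderiv ℝ f x‖ ^ ((2 * m : ℝ) / (m + 2)))
              ^ ((m + 2 : ℝ) / m)) :
    ∀ (Ω : Set (EuclideanSpace ℝ (Fin m))), Ω ⊆ K → MeasurableSet Ω →
      ∀ f : EuclideanSpace ℝ (Fin m) → ℝ,
        DifferentiableOn ℝ f K →
        MemLp f 2 (volume.restrict K) →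
        MemLp (fun x => fderiv ℝ f x) 2 (volume.restrict K) →
        (∫ x in K, f x * h x) = 0 →
        (∫ x in Ω, ‖fderiv ℝ f x‖ ^ 2)
            + ((volume (K \ Ω)).toReal / (volume K).toReal) ^ ((2 : ℝ) / m)
              * ∫ x in K, ‖fderiv ℝ f x‖ ^ 2
          ≥ (1 / (2 * (volume K).toReal ^ ((2 : ℝ) / m) * Ctilde))
              * ∫ x in K, (f x) ^ 2 := by
  intro Ω hΩK hΩ f hf hf2 hDf hmean
  have hmR : (2 : ℝ) ≤ m := by exact_mod_cast hm
  set p : ℝ := (2 * m : ℝ) / (m + 2)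
  have hp : 1 ≤ p := by rw [le_div_iff₀ (by positivity)]; linarith
  have hp2 : p < 2 := by rw [div_lt_iff₀ (by positivity)]; linarith
  have hs : (m + 2 : ℝ) / m = 2 / p := by simp only [p]; field_simp
  have he : 2 / p - 1 = (2 : ℝ) / m := by rw [← hs]; field_simp; ring
  have hgrad := rpow_setIntegral_norm_rpow_le_of_subset hΩK hΩ hKbdd.measure_lt_top hDf hp hp2
  rw [he, ← hs] at hgrad
  set k := (volume K).toReal
  set c := (volume (K \ Ω)).toReal
  have hck : c = k * (c / k) := by
    refine (mul_div_cancel_of_imp' fun hk => ?_).symm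
    exact le_antisymm (hk ▸ ENNReal.toReal_mono hKbdd.measure_lt_top.ne
      (measure_mono sdiff_subset)) ENNReal.toReal_nonneg
  rw [ge_iff_le, one_div_mul_eq_div]
  refine div_le_of_le_mul₀ (by positivity) (by positivity) ?_
  calc ∫ x in K, (f x) ^ 2
      ≤ Ctilde * (2 * ((∫ x in Ω, ‖fderiv ℝ f x‖ ^ 2) * k ^ ((2 : ℝ) / m)
        + (∫ x in K, ‖fderiv ℝ f x‖ ^ 2) * c ^ ((2 : ℝ) / m))) :=
        (hPS f hf hf2 hDf hmean).trans (mul_le_mul_of_nonneg_left hgrad hCt.le)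
    _ = _ := by
        rw [hck, Real.mul_rpow (by positivity) (by positivity), ← hck]
        ring

/-- Core deduction in the proof of the generalized Poincaré inequality: if the
Poincaré–Sobolev inequality `‖f‖_{L²(K)}² ≤ C̃ ‖∇f‖_{L^{2m/(m+2)}(K)}²` holds for all
`f ∈ H¹(K)` with `∫_K f h = 0`, then for any measurable `Ω ⊆ K` and such `f`,
`∫_Ω |∇f|² + (|K∖Ω|/|K|)^{2/m} ∫_K |∇f|² ≥ (1/(2|K|^{2/m} C̃)) ∫_K |f|²`. -/
theorem generalized_poincare_from_poincare_sobolev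
    (m : ℕ) (hm : 2 ≤ m)
    (K : Set (EuclideanSpace ℝ (Fin m)))
    (hKmeas : MeasurableSet K) (hKbdd : Bornology.IsBounded K)
    (h : EuclideanSpace ℝ (Fin m) → ℝ)
    (hhmeas : Measurable h) (hhbdd : ∃ B : ℝ, ∀ x, |h x| ≤ B)
    (hhint : ∫ x in K, h x = 1)
    (Ctilde : ℝ) (hCt : 0 < Ctilde)
    -- the Poincaré–Sobolev inequality on K, for mean-zero H¹ functions:
    (hPS : ∀ f : EuclideanSpace ℝ (Fin m) → ℝ,
      DifferentiableOn ℝ f K →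
      MemLp f 2 (volume.restrict K) →
      MemLp (fun x => fderiv ℝ f x) 2 (volume.restrict K) →
      (∫ x in K, f x * h x) = 0 →
      (∫ x in K, (f x) ^ 2)
        ≤ Ctilde * (∫ x in K, ‖fderiv ℝ f x‖ ^ ((2 * m : ℝ) / (m + 2)))
              ^ ((m + 2 : ℝ) / m)) :
    ∀ (Ω : Set (EuclideanSpace ℝ (Fin m))), Ω ⊆ K → MeasurableSet Ω →
      ∀ f : EuclideanSpace ℝ (Fin m) → ℝ,
        DifferentiableOn ℝ f K →
        MemLp f 2 (volume.restrict K) →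
        MemLp (fun x => fderiv ℝ f x) 2 (volume.restrict K) →
        (∫ x in K, f x * h x) = 0 →
        (∫ x in Ω, ‖fderiv ℝ f x‖ ^ 2)
            + ((volume (K \ Ω)).toReal / (volume K).toReal) ^ ((2 : ℝ) / m)
              * ∫ x in K, ‖fderiv ℝ f x‖ ^ 2
          ≥ (1 / (2 * (volume K).toReal ^ ((2 : ℝ) / m) * Ctilde))
              * ∫ x in K, (f x) ^ 2 :=
  generalized_poincare_from_poincare_sobolev_general m hm K hKbdd h Ctilde hCt hPS
end

section
/- Let φ ∈ L²(ℝ³) with ‖φ‖ = 1, K ⊂ ℝ³ measurable, and for each X ∈ ℝ^{3(N−1)} let f_X(x) ≥ 0 with Ψ(x,X) = φ(x) f_X(x) square integrable. Define ⟨f_X⟩_K = (∫_K |φ|²)^{-1} ∫_K |φ(x)|² f_X(x) dx. Then (1/N)⟨φ, γ φ⟩ ≥ (∫_K |φ(x)|² dx)² ∫ dX ⟨f_X⟩_K², where γ(x,x') = N ∫ Ψ(x,X) Ψ(x',X) dX. -/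
open MeasureTheory Set

noncomputable section

abbrev V3 := EuclideanSpace ℝ (Fin 3)

/-- Key condensation step in the proof of Theorem 1: with `Ψ(x,X) = φ(x) f_X(x)`,
`f_X ≥ 0`, `‖φ‖₂ = 1`, and `⟨f_X⟩_K` the `|φ|²`-weighted average of `f_X` over `K`,
one has `(1/N)⟨φ, γφ⟩ ≥ (∫_K |φ|²)² ∫ dX ⟨f_X⟩_K²`, where
`⟨φ, γφ⟩ = N ∫ dX (∫ φ(x) Ψ(x,X) dx)²`. -/
theorem condensation_lower_bound
    (n : ℕ)
    (φ : V3 → ℝ) (hφ_norm : (∫ x : V3, (φ x) ^ 2) = 1)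
    (K : Set V3) (hK : MeasurableSet K)
    (f : V3 → (Fin n → V3) → ℝ) (hf_nonneg : ∀ x X, 0 ≤ f x X)
    (Ψ : V3 → (Fin n → V3) → ℝ) (hΨ : ∀ x X, Ψ x X = φ x * f x X)
    (hΨ_int : ∀ X, Integrable (fun x : V3 => (φ x) ^ 2 * f x X))
    (hγ_int : Integrable (fun X : Fin n → V3 => (∫ x : V3, φ x * Ψ x X) ^ 2))
    (havg_meas : AEStronglyMeasurable
      (fun X : Fin n → V3 => ∫ x in K, (φ x) ^ 2 * f x X) volume) :
    (1 / (n + 1 : ℝ)) * ((n + 1 : ℝ) * ∫ X : Fin n → V3, (∫ x : V3, φ x * Ψ x X) ^ 2)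
      ≥ (∫ x in K, (φ x) ^ 2) ^ 2
        * ∫ X : Fin n → V3,
            ((∫ x in K, (φ x) ^ 2)⁻¹ * ∫ x in K, (φ x) ^ 2 * f x X) ^ 2 := by

  have hn : (n + 1 : ℝ) ≠ 0 := by positivity
  have hkey : (fun X : Fin n → V3 => (∫ x : V3, φ x * Ψ x X) ^ 2)
      = fun X : Fin n → V3 => (∫ x : V3, (φ x) ^ 2 * f x X) ^ 2 := by
    funext X
    congr 1
    refine integral_congr_ae (Filter.Eventually.of_forall fun x => ?_)
    show φ x * Ψ x X = (φ x) ^ 2 * f x X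
    rw [hΨ]; ring
  rw [one_div, inv_mul_cancel_left₀ hn, hkey]
  set c := ∫ x in K, (φ x) ^ 2 with hc
  set A := fun X : Fin n → V3 => ∫ x in K, (φ x) ^ 2 * f x X with hA
  set B := fun X : Fin n → V3 => ∫ x : V3, (φ x) ^ 2 * f x X with hB
  have hBint : Integrable (fun X => (B X) ^ 2) := by rwa [hkey] at hγ_int
  have hA_nonneg : ∀ X, 0 ≤ A X := fun X =>
    integral_nonneg fun x => mul_nonneg (sq_nonneg _) (hf_nonneg x X)
  have hAB : ∀ X, A X ≤ B X := fun X =>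
    setIntegral_le_integral (hΨ_int X)
      (Filter.Eventually.of_forall fun x => mul_nonneg (sq_nonneg _) (hf_nonneg x X))
  have hA2B2 : ∀ X, (A X) ^ 2 ≤ (B X) ^ 2 := fun X =>
    pow_le_pow_left₀ (hA_nonneg X) (hAB X) 2
  have hAint : Integrable (fun X => (A X) ^ 2) := by
    refine hBint.mono (havg_meas.pow 2) ?_
    refine Filter.Eventually.of_forall fun X => ?_
    rw [Real.norm_eq_abs, Real.norm_eq_abs, abs_of_nonneg (sq_nonneg _),
      abs_of_nonneg (sq_nonneg _)]
    exact hA2B2 X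
  have step1 : (∫ X : Fin n → V3, (A X) ^ 2) ≤ ∫ X : Fin n → V3, (B X) ^ 2 :=
    integral_mono hAint hBint hA2B2
  have step2 : c ^ 2 * (∫ X : Fin n → V3, (c⁻¹ * A X) ^ 2)
      ≤ ∫ X : Fin n → V3, (A X) ^ 2 := by
    have : (∫ X : Fin n → V3, (c⁻¹ * A X) ^ 2)
        = (c ^ 2)⁻¹ * ∫ X : Fin n → V3, (A X) ^ 2 := by
      rw [← integral_const_mul]
      refine integral_congr_ae (Filter.Eventually.of_forall fun X => ?_)
      show (c⁻¹ * A X) ^ 2 = (c ^ 2)⁻¹ * A X ^ 2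
      rw [mul_pow, ← inv_pow]
    rw [this, ← mul_assoc]
    have h1 : c ^ 2 * (c ^ 2)⁻¹ ≤ 1 := by
      rcases eq_or_ne c 0 with h | h
      · simp [h]
      · rw [mul_inv_cancel₀ (pow_ne_zero 2 h)]
    have h2 : 0 ≤ ∫ X : Fin n → V3, (A X) ^ 2 :=
      integral_nonneg fun X => sq_nonneg _
    nlinarith [h2]
  exact le_trans step2 step1


end
end
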